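/- For every positive integer x, β(x) = β(x − l̃_{γ(x)}) + 1. -/

import Mathlib

/-!
Represent a sum of modified Lucas numbers by the multiset of its indices. The point is that
some optimal representation of `x` uses `l̃_γ`, `γ = γ(x)`. Since `l̃` is increasing, every index
in a representation of `x` is at most `γ`, and by strong induction on `g` one can remove `l̃_g`
from any representation with indices `≤ g` and value `≥ l̃_g`, losing at least one summand:
first remove `l̃_{g-1}`; then either the result still contains `l̃_{g-1}` and the two copies
merge by `2 l_n = l_{n+1} + l_{n-2}`, or its indices are `< g - 1` and one removes
`l̃_g - l̃_{g-1}` from it, which is `l̃_{g-2}` (or `l̃_0` for small `g`).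
-/

/-- The Lucas sequence: l 0 = 2, l 1 = 1, l (n+2) = l (n+1) + l n. -/
def lucas : ℕ → ℕ
  | 0 => 2
  | 1 => 1
  | n + 2 => lucas (n + 1) + lucas n

/-- The modified (monotone) Lucas sequence: l̃ 0 = 1, l̃ 1 = 2, l̃ n = l n for n ≥ 2. -/
def ltil : ℕ → ℕ
  | 0 => 1
  | 1 => 2
  | n + 2 => lucas (n + 2)

/-- β x : minimal number of summands in a representation of x as a sum of
modified Lucas numbers (with repetitions allowed). -/
noncomputable def beta (x : ℕ) : ℕ :=
  sInf {s : ℕ | ∃ k : ℕ, ∃ b : ℕ → ℕ,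
    x = ∑ i ∈ Finset.range (k + 1), b i * ltil i ∧ s = ∑ i ∈ Finset.range (k + 1), b i}

/-- γ x : the greatest k with l̃ k ≤ x (for x ≥ 1). -/
noncomputable def gamma (x : ℕ) : ℕ := sSup {k : ℕ | ltil k ≤ x}

/-- S a : the additive submonoid of ℕ generated by {l_a} ∪ {l_a + l_n : n ∈ ℕ}. -/
def Sset (a : ℕ) : AddSubmonoid ℕ :=
  AddSubmonoid.closure ({lucas a} ∪ {x : ℕ | ∃ n : ℕ, x = lucas a + lucas n})

/-- T a : the additive submonoid of ℕ generated by {l_a + l_n : n ∈ ℕ}. -/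
def Tset (a : ℕ) : AddSubmonoid ℕ :=
  AddSubmonoid.closure {x : ℕ | ∃ n : ℕ, x = lucas a + lucas n}

open Multiset

lemma lucas_pos : ∀ n, 0 < lucas n
  | 0 => Nat.two_pos
  | 1 => Nat.one_pos
  | n + 2 => Nat.add_pos_left (lucas_pos (n + 1)) _

lemma ltil_pos : ∀ n, 0 < ltil n
  | 0 => Nat.one_pos
  | 1 => Nat.two_pos
  | n + 2 => lucas_pos (n + 2)

lemma ltil_add_two : ∀ n, n ≠ 1 → ltil (n + 2) = ltil (n + 1) + ltil n
  | 0, _ => rfl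
  | _ + 2, _ => rfl

lemma ltil_strictMono : StrictMono ltil := by
  refine strictMono_nat_of_lt_succ fun n => ?_
  match n with
  | 0 | 1 => decide
  | n + 2 => exact Nat.lt_add_of_pos_right (lucas_pos (n + 1))

lemma le_ltil (n : ℕ) : n ≤ ltil n := ltil_strictMono.le_apply

-- `2 lₙ = lₙ₊₁ + lₙ₋₂`, with the small indices adjusted to the modified sequence.
lemma exists_sum_map_ltil_add_ltil_succ_eq_two_mul : ∀ n, ∃ r : Multiset ℕ,
    card r ≤ 1 ∧ (∀ e ∈ r, e < n) ∧ (r.map ltil).sum + ltil (n + 1) = 2 * ltil n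
  | 0 => ⟨0, by simp, by simp, rfl⟩
  | 1 => ⟨{0}, by simp, by simp, rfl⟩
  | 2 => ⟨{1}, by simp, by simp, rfl⟩
  | 3 => ⟨{0}, by simp, by simp, rfl⟩
  | n + 4 => ⟨{n + 2}, by simp, by simp, by
      have h₅ : ltil (n + 4 + 1) = ltil (n + 4) + ltil (n + 3) := ltil_add_two (n + 3) (by omega)
      have h₄ : ltil (n + 4) = ltil (n + 3) + ltil (n + 2) := ltil_add_two (n + 2) (by omega)
      rw [map_singleton, sum_singleton]
      omega⟩

lemma ltil_le_sum_map_ltil {m : Multiset ℕ} {e : ℕ} (he : e ∈ m) : ltil e ≤ (m.map ltil).sum :=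
  le_sum_of_mem (mem_map_of_mem ltil he)

lemma ne_zero_of_ltil_le_sum_map_ltil {m : Multiset ℕ} {g : ℕ} (h : ltil g ≤ (m.map ltil).sum) :
    m ≠ 0 := by
  rintro rfl
  simpa using (ltil_pos g).trans_le h

lemma exists_sum_map_ltil_add_ltil_zero_eq {m : Multiset ℕ} (hm : ∀ e ∈ m, e ≤ 1)
    (hpos : ltil 0 ≤ (m.map ltil).sum) :
    ∃ m' : Multiset ℕ, card m' ≤ card m ∧ (∀ e ∈ m', e ≤ 1) ∧
      (m'.map ltil).sum + ltil 0 = (m.map ltil).sum := by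
  obtain ⟨e, he⟩ := exists_mem_of_ne_zero (ne_zero_of_ltil_le_sum_map_ltil hpos)
  have hsum := sum_map_erase (f := ltil) he
  have hcard := card_erase_lt_of_mem he
  have hle : ∀ e' ∈ m.erase e, e' ≤ 1 := fun e' he' => hm e' (mem_of_mem_erase he')
  have he₁ := hm e he
  interval_cases e
  · exact ⟨m.erase 0, hcard.le, hle, by rw [← hsum]; exact add_comm _ _⟩
  · refine ⟨0 ::ₘ m.erase 1, by simpa using hcard, ?_, ?_⟩
    · simpa using hle
    · rw [← hsum]
      simp only [map_cons, sum_cons]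
      change 1 + _ + 1 = 2 + _
      omega

lemma exists_sum_map_ltil_add_ltil_succ_eq_of_mem {m : Multiset ℕ} {h : ℕ}
    (hm : ∀ e ∈ m, e ≤ h) (hh : h ∈ m) :
    ∃ m' : Multiset ℕ, card m' ≤ card m ∧ (∀ e ∈ m', e ≤ h + 1) ∧
      (m'.map ltil).sum + ltil (h + 1) = (m.map ltil).sum + ltil h := by
  obtain ⟨r, hr_card, hr_lt, hr_sum⟩ := exists_sum_map_ltil_add_ltil_succ_eq_two_mul h
  have hsum := sum_map_erase (f := ltil) hh
  have hcard := card_erase_lt_of_mem hh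
  refine ⟨r + m.erase h, ?_, ?_, ?_⟩
  · rw [card_add]
    omega
  · intro e he
    rcases mem_add.1 he with he | he
    · exact (hr_lt e he).le.trans h.le_succ
    · exact (hm e (mem_of_mem_erase he)).trans h.le_succ
  · rw [map_add, sum_add]
    omega

theorem exists_sum_map_ltil_add_ltil_eq (g : ℕ) :
    ∀ m : Multiset ℕ, (∀ e ∈ m, e ≤ g) → ltil g ≤ (m.map ltil).sum →
      ∃ m' : Multiset ℕ, card m' < card m ∧ (∀ e ∈ m', e ≤ g) ∧
        (m'.map ltil).sum + ltil g = (m.map ltil).sum := by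
  induction g using Nat.strong_induction_on with
  | _ g ih =>
  intro m hm hsum
  by_cases hg : g ∈ m
  · exact ⟨m.erase g, card_erase_lt_of_mem hg, fun e he => hm e (mem_of_mem_erase he),
      by rw [add_comm, sum_map_erase hg]⟩
  have hlt : ∀ e ∈ m, e < g := fun e he => (hm e he).lt_of_ne fun h => hg (h ▸ he)
  obtain ⟨h, rfl⟩ : ∃ h, g = h + 1 := by
    obtain ⟨e, he⟩ := exists_mem_of_ne_zero (ne_zero_of_ltil_le_sum_map_ltil hsum)
    exact Nat.exists_eq_add_one.2 ((Nat.zero_le e).trans_lt (hlt e he))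
  have hmono : ltil h < ltil (h + 1) := ltil_strictMono h.lt_succ_self
  obtain ⟨m₁, hcard₁, hm₁, hsum₁⟩ :=
    ih h h.lt_succ_self m (fun e he => Nat.le_of_lt_succ (hlt e he)) (hmono.le.trans hsum)
  obtain ⟨m₂, hcard₂, hm₂, hsum₂⟩ : ∃ m₂ : Multiset ℕ, card m₂ ≤ card m₁ ∧
      (∀ e ∈ m₂, e ≤ h + 1) ∧ (m₂.map ltil).sum + ltil (h + 1) = (m₁.map ltil).sum + ltil h := by
    by_cases hh : h ∈ m₁
    · exact exists_sum_map_ltil_add_ltil_succ_eq_of_mem hm₁ hh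
    have hlt₁ : ∀ e ∈ m₁, e < h := fun e he => (hm₁ e he).lt_of_ne fun h => hh (h ▸ he)
    rcases lt_or_ge h 3 with h3 | h3
    · have hstep : ltil (h + 1) = ltil h + ltil 0 := by interval_cases h <;> rfl
      obtain ⟨m₂, hcard₂, hm₂, hsum₂⟩ := exists_sum_map_ltil_add_ltil_zero_eq (m := m₁)
        (fun e he => by have := hlt₁ e he; omega) (by omega)
      exact ⟨m₂, hcard₂, fun e he => (hm₂ e he).trans (by omega), by omega⟩
    · obtain ⟨k, rfl⟩ : ∃ k, h = k + 3 := ⟨h - 3, by omega⟩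
      have hstep : ltil (k + 3 + 1) = ltil (k + 3) + ltil (k + 2) := ltil_add_two (k + 2) (by omega)
      obtain ⟨m₂, hcard₂, hm₂, hsum₂⟩ :=
        ih (k + 2) (by omega) m₁ (fun e he => Nat.le_of_lt_succ (hlt₁ e he)) (by omega)
      exact ⟨m₂, hcard₂.le, fun e he => (hm₂ e he).trans (by omega), by omega⟩
  exact ⟨m₂, hcard₂.trans_lt hcard₁, hm₂, by omega⟩

lemma beta_le_card (m : Multiset ℕ) : beta (m.map ltil).sum ≤ card m := by
  classical
  have hsub : m.toFinset ⊆ Finset.range ((m.map ltil).sum + 1) := fun e he =>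
    Finset.mem_range.2 <| Nat.lt_succ_of_le <|
      (le_ltil e).trans (ltil_le_sum_map_ltil (mem_toFinset.1 he))
  have hcount : ∀ i ∈ Finset.range ((m.map ltil).sum + 1), i ∉ m.toFinset → m.count i = 0 :=
    fun i _ hi => count_eq_zero.2 fun h => hi (mem_toFinset.2 h)
  refine Nat.sInf_le ⟨(m.map ltil).sum, m.count, ?_, ?_⟩
  · conv_lhs => rw [Finset.sum_multiset_map_count]
    exact Finset.sum_subset hsub fun i hi hi' => by simp [hcount i hi hi']
  · rw [← toFinset_sum_count_eq, Finset.sum_subset hsub hcount]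

lemma exists_card_eq_beta (x : ℕ) : ∃ m : Multiset ℕ, (m.map ltil).sum = x ∧ card m = beta x := by
  obtain ⟨k, b, hx, hb⟩ := Nat.sInf_mem (s := {s : ℕ | ∃ k : ℕ, ∃ b : ℕ → ℕ,
      x = ∑ i ∈ Finset.range (k + 1), b i * ltil i ∧ s = ∑ i ∈ Finset.range (k + 1), b i})
    ⟨x, 0, fun _ => x, by simp [ltil], by simp⟩
  refine ⟨(Finset.range (k + 1)).val.bind fun i => replicate (b i) i, ?_, ?_⟩
  · simp [map_bind, sum_bind, hx, Finset.sum_eq_multiset_sum]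
  · rw [beta, hb]
    simp [card_bind, Finset.sum_eq_multiset_sum]

lemma bddAbove_setOf_ltil_le (x : ℕ) : BddAbove {k | ltil k ≤ x} :=
  ⟨x, fun k hk => (le_ltil k).trans hk⟩

lemma le_gamma {x k : ℕ} (h : ltil k ≤ x) : k ≤ gamma x :=
  le_csSup (bddAbove_setOf_ltil_le x) h

lemma ltil_gamma_le {x : ℕ} (hx : 0 < x) : ltil (gamma x) ≤ x :=
  Nat.sSup_mem ⟨0, hx⟩ (bddAbove_setOf_ltil_le x)

theorem beta_recurrence (x : ℕ) (hx : 0 < x) :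
    beta x = beta (x - ltil (gamma x)) + 1 := by
  have hγ := ltil_gamma_le hx
  obtain ⟨m, hm, hcard⟩ := exists_card_eq_beta x
  obtain ⟨m', hcard', -, hm'⟩ := exists_sum_map_ltil_add_ltil_eq (gamma x) m
    (fun e he => le_gamma (hm ▸ ltil_le_sum_map_ltil he)) (hm ▸ hγ)
  obtain ⟨n, hn, hncard⟩ := exists_card_eq_beta (x - ltil (gamma x))
  have hle : beta x ≤ beta (x - ltil (gamma x)) + 1 := by
    have := beta_le_card (gamma x ::ₘ n)
    rwa [map_cons, sum_cons, hn, card_cons, hncard, Nat.add_sub_cancel' hγ] at this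
  have hge : beta (x - ltil (gamma x)) ≤ card m' := by
    have := beta_le_card m'
    rwa [show (m'.map ltil).sum = x - ltil (gamma x) by omega] at this
  omega
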